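/- Let g : ℝⁿ → ℝ be μ-strongly convex with L_g-Lipschitz gradient, C ⊆ ℝⁿ closed convex, x* = argmin_{x∈C} g(x), and c ∈ (0, 1/L_g]. Then the global error bound ‖x - Proj_C(x - c∇g(x))‖ ≥ cμ‖x - x*‖ holds for all x ∈ ℝⁿ. -/

import Mathlib

/-!
The projection onto `C` is nonexpansive, and by first-order optimality `x*` is the projection of
its own gradient step `x* - c∇g(x*)`. For `c ≤ 1/L` the gradient step is a `(1 - cμ)`-contraction:
this is Baillon–Haddad co-coercivity applied to the convex function `g - μ/2 ‖·‖²`, whose Bregman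
divergence is at most `(L - μ)/2 ‖·‖²` by the descent lemma. So the projected step `p` satisfies
`‖p - x*‖ ≤ (1 - cμ)‖x - x*‖`, and `‖x - x*‖ ≤ ‖x - p‖ + ‖p - x*‖` gives the bound.
-/

open Set InnerProductSpace

section InnerProduct

variable {E : Type*} [NormedAddCommGroup E] [InnerProductSpace ℝ E]

lemma real_inner_sub_le_zero_of_forall_norm_sub_le {K : Set E} (hK : Convex ℝ K) {u p w : E}
    (hp : p ∈ K) (hmin : ∀ w ∈ K, ‖u - p‖ ≤ ‖u - w‖) (hw : w ∈ K) :
    ⟪u - p, w - p⟫_ℝ ≤ 0 := by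
  have : Nonempty K := ⟨⟨p, hp⟩⟩
  have hbdd : BddBelow (range fun w : K ↦ ‖u - w‖) := ⟨0, by rintro _ ⟨w, rfl⟩; positivity⟩
  refine (norm_eq_iInf_iff_real_inner_le_zero hK hp).1 ?_ w hw
  exact le_antisymm (le_ciInf fun w ↦ hmin w w.2) (ciInf_le hbdd ⟨p, hp⟩)

lemma norm_sub_le_of_real_inner_le_zero {u v p q : E} (hp : ⟪u - p, q - p⟫_ℝ ≤ 0)
    (hq : ⟪v - q, p - q⟫_ℝ ≤ 0) : ‖p - q‖ ≤ ‖u - v‖ := by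
  have hp' : ⟪u - p, p - q⟫_ℝ = -⟪u - p, q - p⟫_ℝ := by rw [← inner_neg_right, neg_sub]
  have hsq : ‖p - q‖ ^ 2 ≤ ⟪u - v, p - q⟫_ℝ := by
    have e : u - v = (u - p) - (v - q) + (p - q) := by abel
    rw [e, inner_add_left, inner_sub_left, real_inner_self_eq_norm_sq]
    linarith
  have hcs := real_inner_le_norm (u - v) (p - q)
  nlinarith [norm_nonneg (p - q), norm_nonneg (u - v)]

variable {f : E → ℝ} {G : E → E} {Λ : ℝ}

lemma real_inner_sub_nonneg_of_forall_real_inner_le (hlow : ∀ x y, ⟪G x, y - x⟫_ℝ ≤ f y - f x)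
    (x y : E) : 0 ≤ ⟪G x - G y, x - y⟫_ℝ := by
  have h₁ := hlow x y
  have h₂ := hlow y x
  rw [← neg_sub x y, inner_neg_right] at h₁
  rw [inner_sub_left]
  linarith

lemma norm_sub_sq_le_mul_real_inner_of_bregman_bounds
    (hlow : ∀ x y, ⟪G x, y - x⟫_ℝ ≤ f y - f x)
    (hup : ∀ x y, f y - f x - ⟪G x, y - x⟫_ℝ ≤ Λ / 2 * ‖y - x‖ ^ 2) (x y : E) :
    ‖G x - G y‖ ^ 2 ≤ Λ * ⟪G x - G y, x - y⟫_ℝ := by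
  set w := G x - G y
  -- Compare `x` with `y + t • w` and `y` with `x - t • w`: the resulting quadratic in `t`
  -- is nonnegative, so its discriminant is nonpositive.
  have hquad : ∀ t : ℝ, 0 ≤ Λ * ‖w‖ ^ 2 * (t * t) + (-2 * ‖w‖ ^ 2) * t + ⟪w, x - y⟫_ℝ := by
    intro t
    have h₁ := hup y (y + t • w)
    have h₂ := hlow x (y + t • w)
    have h₃ := hup x (x - t • w)
    have h₄ := hlow y (x - t • w)
    simp only [add_sub_cancel_left, sub_sub_cancel_left, norm_neg, norm_smul, mul_pow,
      Real.norm_eq_abs, sq_abs, inner_neg_right, real_inner_smul_right] at h₁ h₃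
    rw [show y + t • w - x = -(x - y) + t • w by abel, inner_add_right, inner_neg_right,
      real_inner_smul_right] at h₂
    rw [show x - t • w - y = (x - y) - t • w by abel, inner_sub_right,
      real_inner_smul_right] at h₄
    have hw : t * ⟪G x, w⟫_ℝ - t * ⟪G y, w⟫_ℝ = t * ‖w‖ ^ 2 := by
      rw [← mul_sub, ← inner_sub_left, real_inner_self_eq_norm_sq]
    have hxy : ⟪w, x - y⟫_ℝ = ⟪G x, x - y⟫_ℝ - ⟪G y, x - y⟫_ℝ := inner_sub_left _ _ _
    linarith
  have hdisc := discrim_le_zero hquad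
  rw [discrim] at hdisc
  rcases eq_or_ne w 0 with hw | hw
  · simp [hw]
  · refine le_of_mul_le_mul_left (a := 4 * ‖w‖ ^ 2) (by linarith) ?_
    have := norm_pos_iff.2 hw
    positivity

lemma norm_sub_smul_le_of_cocoercive {d e : E} {μ L c : ℝ} (hmono : 0 ≤ ⟪e - μ • d, d⟫_ℝ)
    (hcoco : ‖e - μ • d‖ ^ 2 ≤ (L - μ) * ⟪e - μ • d, d⟫_ℝ) (hc : 0 ≤ c) (hμL : μ ≤ L)
    (hcL : c * L ≤ 1) : ‖d - c • e‖ ≤ (1 - c * μ) * ‖d‖ := by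
  have hcμ : c * μ ≤ 1 := by nlinarith
  set w := e - μ • d
  have hexp : ‖d - c • e‖ ^ 2
      = (1 - c * μ) ^ 2 * ‖d‖ ^ 2 - 2 * c * (1 - c * μ) * ⟪w, d⟫_ℝ + c ^ 2 * ‖w‖ ^ 2 := by
    rw [show d - c • e = (1 - c * μ) • d - c • w by simp only [w]; module, norm_sub_sq_real,
      real_inner_smul_left, real_inner_smul_right, norm_smul, norm_smul, mul_pow, mul_pow,
      Real.norm_eq_abs, Real.norm_eq_abs, sq_abs, sq_abs, real_inner_comm]
    ring
  have hw : c ^ 2 * ‖w‖ ^ 2 ≤ 2 * c * (1 - c * μ) * ⟪w, d⟫_ℝ := by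
    nlinarith [mul_le_mul_of_nonneg_left hcoco (sq_nonneg c), mul_nonneg hc hmono]
  refine (pow_le_pow_iff_left₀ (norm_nonneg _) ?_ two_ne_zero).1 ?_
  · exact mul_nonneg (by linarith) (norm_nonneg _)
  · rw [hexp, mul_pow]
    linarith

end InnerProduct

section Gradient

variable {E : Type*} [NormedAddCommGroup E] [InnerProductSpace ℝ E] [CompleteSpace E]
  {f : E → ℝ} {G : E → E} {g x : E}

lemma HasGradientAt.hasDerivAt_add_smul {v : E} {t : ℝ} (h : HasGradientAt f g (x + t • v)) :
    HasDerivAt (fun s : ℝ ↦ f (x + s • v)) ⟪g, v⟫_ℝ t := by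
  have hline : HasDerivAt (fun s : ℝ ↦ x + s • v) v t :=
    ((hasDerivAt_id t).smul_const v).const_add x |>.congr_deriv (one_smul ℝ v)
  have hF : HasFDerivAt f (toDual ℝ E g) (x + t • v) := h
  simpa [Function.comp_def] using hF.comp_hasDerivAt t hline

lemma ConvexOn.real_inner_gradient_le (hf : ConvexOn ℝ univ f) (h : HasGradientAt f g x)
    (y : E) : ⟪g, y - x⟫_ℝ ≤ f y - f x := by
  have hline : ConvexOn ℝ univ fun t : ℝ ↦ f (x + t • (y - x)) := by
    simpa [Function.comp_def, AffineMap.lineMap_apply, add_comm] using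
      hf.comp_affineMap (AffineMap.lineMap x y)
  have hderiv := HasGradientAt.hasDerivAt_add_smul (v := y - x) (t := 0) (by simpa using h)
  simpa [slope_def_field] using
    hline.le_slope_of_hasDerivAt (mem_univ 0) (mem_univ 1) one_pos hderiv

lemma HasGradientAt.sub_mul_norm_sq (h : HasGradientAt f g x) (μ : ℝ) :
    HasGradientAt (fun z ↦ f z - μ / 2 * ‖z‖ ^ 2) (g - μ • x) x := by
  rw [hasGradientAt_iff_hasFDerivAt] at h ⊢
  refine (h.sub ((hasStrictFDerivAt_norm_sq x).hasFDerivAt.const_mul (μ / 2))).congr_fderiv ?_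
  ext v
  simp
  ring

lemma IsMinOn.real_inner_gradient_nonneg {s : Set E} (hmin : IsMinOn f s x) (hs : Convex ℝ s)
    (hx : x ∈ s) (h : HasGradientAt f g x) {w : E} (hw : w ∈ s) : 0 ≤ ⟪g, w - x⟫_ℝ := by
  have hF : HasFDerivAt f (toDual ℝ E g) x := h
  simpa using hmin.localize.hasFDerivWithinAt_nonneg hF.hasFDerivWithinAt
    (sub_mem_posTangentConeAt_of_segment_subset (hs.segment_subset hx hw))

lemma sub_sub_real_inner_le_of_lipschitz_gradient {L : ℝ} (hG : ∀ z, HasGradientAt f (G z) z)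
    (hL : ∀ a b, ‖G a - G b‖ ≤ L * ‖a - b‖) (x y : E) :
    f y - f x - ⟪G x, y - x⟫_ℝ ≤ L / 2 * ‖y - x‖ ^ 2 := by
  set v := y - x
  let ψ : ℝ → ℝ := fun t ↦ f (x + t • v) - t * ⟪G x, v⟫_ℝ - t ^ 2 * (L / 2 * ‖v‖ ^ 2)
  have hψ : ∀ t, HasDerivAt ψ (⟪G (x + t • v) - G x, v⟫_ℝ - t * (L * ‖v‖ ^ 2)) t := by
    intro t
    refine ((((hG _).hasDerivAt_add_smul).sub (hasDerivAt_mul_const _)).sub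
      ((hasDerivAt_pow 2 t).mul_const (L / 2 * ‖v‖ ^ 2))).congr_deriv ?_
    rw [inner_sub_left]
    ring
  have hψ' : ∀ t ∈ interior (Icc (0 : ℝ) 1), deriv ψ t ≤ 0 := by
    intro t ht
    rw [interior_Icc] at ht
    have hbound : ⟪G (x + t • v) - G x, v⟫_ℝ ≤ t * (L * ‖v‖ ^ 2) :=
      calc ⟪G (x + t • v) - G x, v⟫_ℝ ≤ ‖G (x + t • v) - G x‖ * ‖v‖ := real_inner_le_norm _ _
        _ ≤ L * ‖t • v‖ * ‖v‖ := by
          gcongr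
          exact (hL _ _).trans_eq (by rw [add_sub_cancel_left])
        _ = t * (L * ‖v‖ ^ 2) := by rw [norm_smul, Real.norm_of_nonneg ht.1.le]; ring
    rw [(hψ t).deriv]
    linarith
  have hanti : AntitoneOn ψ (Icc 0 1) :=
    antitoneOn_of_deriv_nonpos (convex_Icc 0 1)
      (fun t _ ↦ (hψ t).continuousAt.continuousWithinAt)
      (fun t _ ↦ (hψ t).differentiableAt.differentiableWithinAt) hψ'
  have h01 := hanti (left_mem_Icc.2 zero_le_one) (right_mem_Icc.2 zero_le_one) zero_le_one
  simp only [ψ, v, zero_smul, add_zero, one_smul, add_sub_cancel] at h01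
  linarith

lemma norm_sub_gradient_step_le {μ L c : ℝ} (hG : ∀ z, HasGradientAt f (G z) z)
    (hf : StrongConvexOn univ μ f) (hL : ∀ a b, ‖G a - G b‖ ≤ L * ‖a - b‖) (hc : 0 ≤ c)
    (hcL : c * L ≤ 1) (x y : E) :
    ‖(x - c • G x) - (y - c • G y)‖ ≤ (1 - c * μ) * ‖x - y‖ := by
  set h := fun z ↦ f z - μ / 2 * ‖z‖ ^ 2
  set Gh := fun z ↦ G z - μ • z
  have hlow : ∀ a b, ⟪Gh a, b - a⟫_ℝ ≤ h b - h a := fun a b ↦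
    (strongConvexOn_iff_convex.1 hf).real_inner_gradient_le ((hG a).sub_mul_norm_sq μ) b
  have hup : ∀ a b, h b - h a - ⟪Gh a, b - a⟫_ℝ ≤ (L - μ) / 2 * ‖b - a‖ ^ 2 := by
    intro a b
    have hdesc := sub_sub_real_inner_le_of_lipschitz_gradient hG hL a b
    have hnorm : ‖b‖ ^ 2 = ‖a‖ ^ 2 + 2 * ⟪a, b - a⟫_ℝ + ‖b - a‖ ^ 2 := by
      rw [← norm_add_sq_real, add_sub_cancel]
    simp only [h, Gh, inner_sub_left, real_inner_smul_left, hnorm]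
    linarith
  by_cases hxy : x = y
  · simp [hxy]
  have hμL : μ ≤ L := by
    have hnonneg : 0 ≤ (L - μ) / 2 * ‖y - x‖ ^ 2 := by linarith [hlow x y, hup x y]
    have hpos : 0 < ‖y - x‖ ^ 2 := by
      have := norm_pos_iff.2 (sub_ne_zero.2 (Ne.symm hxy))
      positivity
    nlinarith
  have hmono := real_inner_sub_nonneg_of_forall_real_inner_le hlow x y
  have hcoco := norm_sub_sq_le_mul_real_inner_of_bregman_bounds hlow hup x y
  have e : Gh x - Gh y = (G x - G y) - μ • (x - y) := by simp only [Gh]; module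
  rw [e] at hmono hcoco
  rw [show (x - c • G x) - (y - c • G y) = (x - y) - c • (G x - G y) by module]
  exact norm_sub_smul_le_of_cocoercive hmono hcoco hc hμL hcL

end Gradient

theorem stmt10_general {n : ℕ} (g : EuclideanSpace ℝ (Fin n) → ℝ)
    (C : Set (EuclideanSpace ℝ (Fin n))) (μ Lg c : ℝ)
    (proj : EuclideanSpace ℝ (Fin n) → EuclideanSpace ℝ (Fin n))
    (xstar : EuclideanSpace ℝ (Fin n))
    (hg : Differentiable ℝ g)
    (hLg : ∀ x x', ‖gradient g x - gradient g x'‖ ≤ Lg * ‖x - x'‖)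
    (hsc : StrongConvexOn Set.univ μ g)
    (hCcvx : Convex ℝ C)
    (hproj : ∀ v, proj v ∈ C ∧ ∀ w ∈ C, ‖v - proj v‖ ≤ ‖v - w‖)
    (hxs : xstar ∈ C ∧ IsMinOn g C xstar)
    (hc : 0 < c) (hcL : c ≤ 1 / Lg) :
    ∀ x, c * μ * ‖x - xstar‖ ≤ ‖x - proj (x - c • gradient g x)‖ := by
  intro x
  have hG : ∀ z, HasGradientAt g (gradient g z) z := fun z ↦ (hg z).hasGradientAt
  have hLg_pos : 0 < Lg := by
    by_contra! h
    have : 1 / Lg ≤ 0 := div_nonpos_of_nonneg_of_nonpos zero_le_one h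
    linarith
  have hcLg : c * Lg ≤ 1 := (le_div_iff₀ hLg_pos).1 hcL
  set p := proj (x - c • gradient g x)
  obtain ⟨hpC, hpmin⟩ := hproj (x - c • gradient g x)
  have hp : ⟪(x - c • gradient g x) - p, xstar - p⟫_ℝ ≤ 0 :=
    real_inner_sub_le_zero_of_forall_norm_sub_le hCcvx hpC hpmin hxs.1
  have hxstar : ⟪(xstar - c • gradient g xstar) - xstar, p - xstar⟫_ℝ ≤ 0 := by
    have := hxs.2.real_inner_gradient_nonneg hCcvx hxs.1 (hG xstar) hpC
    rw [sub_sub_cancel_left, inner_neg_left, real_inner_smul_left]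
    nlinarith
  have hpx : ‖p - xstar‖ ≤ (1 - c * μ) * ‖x - xstar‖ :=
    (norm_sub_le_of_real_inner_le_zero hp hxstar).trans
      (norm_sub_gradient_step_le hG hsc hLg hc.le hcLg x xstar)
  linarith [norm_sub_le_norm_sub_add_norm_sub x p xstar]

/-- Global error bound for the gradient projection residual of a strongly convex problem:
`‖x - Proj_C(x - c∇g(x))‖ ≥ cμ‖x - x*‖` for all `x`. -/
theorem stmt10 {n : ℕ} (g : EuclideanSpace ℝ (Fin n) → ℝ)
    (C : Set (EuclideanSpace ℝ (Fin n))) (μ Lg c : ℝ)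
    (proj : EuclideanSpace ℝ (Fin n) → EuclideanSpace ℝ (Fin n))
    (xstar : EuclideanSpace ℝ (Fin n))
    (hg : Differentiable ℝ g)
    (hLg : ∀ x x', ‖gradient g x - gradient g x'‖ ≤ Lg * ‖x - x'‖)
    (hμ : 0 < μ) (hsc : StrongConvexOn Set.univ μ g)
    (hCne : C.Nonempty) (hCcl : IsClosed C) (hCcvx : Convex ℝ C)
    (hproj : ∀ v, proj v ∈ C ∧ ∀ w ∈ C, ‖v - proj v‖ ≤ ‖v - w‖)
    (hxs : xstar ∈ C ∧ IsMinOn g C xstar)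
    (hc : 0 < c) (hcL : c ≤ 1 / Lg) :
    ∀ x, c * μ * ‖x - xstar‖ ≤ ‖x - proj (x - c • gradient g x)‖ :=
  stmt10_general g C μ Lg c proj xstar hg hLg hsc hCcvx hproj hxs hc hcL
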